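/- Let G be a locally finite weighted graph and x ≠ y vertices with κ(x,y) > 0. Then d(x,y) ≤ (Deg(x) + Deg(y))/κ(x,y). Consequently, if Deg(x) ≤ M for all x and Ric(G) ≥ K > 0, then diam(G) ≤ 2M/K. -/

import Mathlib

/-!
Every admissible test function `f` in the definition of `κ(x,y)` is `1`-Lipschitz, so each term
`w(v,z)(f z - f v)` of `Δf(v)` lies between `-w(v,z)` and `w(v,z)`, i.e. `|Δf(v)| ≤ Deg(v)`.
Hence `κ(x,y) d(x,y) ≤ Δf(x) - Δf(y) ≤ Deg(x) + Deg(y)` as soon as one admissible `f` exists;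
the truncated distance `min(d(x,·), d(x,y)) - d(x,y)` is one, its support lying in a ball, which
is finite in a connected locally finite graph.
-/

open scoped BigOperators

/-- A locally finite weighted graph. -/
structure WeightedGraph (V : Type) where
  w : V → V → ℝ
  m : V → ℝ
  symm : ∀ x y, w x y = w y x
  loopless : ∀ x, w x x = 0
  nonneg : ∀ x y, 0 ≤ w x y
  mpos : ∀ x, 0 < m x
  locFin : ∀ x, Set.Finite {y | w x y ≠ 0}

namespace WeightedGraph

variable {V : Type} (G : WeightedGraph V)

/-- The underlying simple graph. -/
def toSimple : SimpleGraph V where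
  Adj x y := x ≠ y ∧ G.w x y ≠ 0
  symm := ⟨by
    intro x y h
    exact ⟨h.1.symm, by rw [G.symm y x]; exact h.2⟩⟩
  loopless := ⟨by intro x h; exact h.1 rfl⟩

/-- The combinatorial graph distance. -/
noncomputable def dist (x y : V) : ℕ := G.toSimple.dist x y

/-- The graph Laplacian. -/
noncomputable def lap (f : V → ℝ) (x : V) : ℝ :=
  (∑ᶠ y, G.w x y * (f y - f x)) / G.m x

/-- The weighted vertex degree. -/
noncomputable def deg (x : V) : ℝ := (∑ᶠ y, G.w x y) / G.m x

/-- `f` is `1`-Lipschitz with respect to the combinatorial distance. -/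
def Lip1 (f : V → ℝ) : Prop := ∀ x y, |f x - f y| ≤ (G.dist x y : ℝ)

/-- The Ollivier curvature, via the limit-free formula
`κ(x,y) = inf {∇_{xy} Δ f : f ∈ Lip(1) ∩ C_c(V), ∇_{yx} f = 1}`. -/
noncomputable def curv (x y : V) : ℝ :=
  sInf { c | ∃ f : V → ℝ, G.Lip1 f ∧ (Function.support f).Finite ∧
    f y - f x = (G.dist x y : ℝ) ∧ c = (G.lap f x - G.lap f y) / (G.dist x y : ℝ) }

end WeightedGraph

theorem SimpleGraph.Connected.finite_setOf_dist_le {V : Type} {H : SimpleGraph V}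
    (hconn : H.Connected) (hfin : ∀ v, (H.neighborSet v).Finite) (n : ℕ) (x : V) :
    {z | H.dist x z ≤ n}.Finite := by
  induction n generalizing x with
  | zero =>
    refine (Set.finite_singleton x).subset fun z hz => ?_
    exact (hconn.dist_eq_zero_iff.mp (Nat.le_zero.mp hz)).symm
  | succ n ih =>
    refine (((hfin x).biUnion fun a _ => ih a).insert x).subset fun z hz => ?_
    obtain ⟨p, hp⟩ := (hconn x z).exists_walk_length_eq_dist
    cases p with
    | nil => exact Set.mem_insert _ _
    | cons hadj q =>
      refine Set.mem_insert_of_mem _ (Set.mem_biUnion hadj ?_)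
      have hq : q.length ≤ n := by
        have hz' : H.dist x z ≤ n + 1 := hz
        simp only [SimpleGraph.Walk.length_cons] at hp
        omega
      exact (H.dist_le q).trans hq

namespace WeightedGraph

variable {V : Type} (G : WeightedGraph V)

theorem neighborSet_finite (x : V) : (G.toSimple.neighborSet x).Finite :=
  (G.locFin x).subset fun _ hz => hz.2

theorem deg_nonneg (x : V) : 0 ≤ G.deg x :=
  div_nonneg (finsum_nonneg fun z => G.nonneg x z) (G.mpos x).le

theorem dist_comm (x y : V) : G.dist x y = G.dist y x :=
  SimpleGraph.dist_comm

theorem dist_le_one_of_w_ne_zero {x z : V} (h : G.w x z ≠ 0) : G.dist x z ≤ 1 := by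
  have hxz : x ≠ z := by
    rintro rfl
    exact h (G.loopless x)
  exact (SimpleGraph.dist_eq_one_iff_adj.mpr (show G.toSimple.Adj x z from ⟨hxz, h⟩)).le

variable {G}

theorem Lip1.neg {f : V → ℝ} (hf : G.Lip1 f) : G.Lip1 (-f) := fun a b => by
  simpa only [Pi.neg_apply, neg_sub_neg, abs_sub_comm] using hf a b

theorem Lip1.sub_le_one {f : V → ℝ} (hf : G.Lip1 f) {x z : V} (h : G.w x z ≠ 0) :
    f z - f x ≤ 1 :=
  calc f z - f x ≤ |f x - f z| := by rw [abs_sub_comm]; exact le_abs_self _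
    _ ≤ G.dist x z := hf x z
    _ ≤ 1 := by exact_mod_cast G.dist_le_one_of_w_ne_zero h

theorem lap_neg (f : V → ℝ) (x : V) : G.lap (-f) x = -G.lap f x := by
  rw [lap, lap, ← neg_div, ← finsum_neg_distrib]
  congr 1
  refine finsum_congr fun z => ?_
  simp only [Pi.neg_apply]
  ring

theorem lap_le_deg {f : V → ℝ} (hf : G.Lip1 f) (x : V) : G.lap f x ≤ G.deg x := by
  refine div_le_div_of_nonneg_right (finsum_le_finsum' ?_ (G.locFin x) fun z => ?_) (G.mpos x).le
  · exact (G.locFin x).subset fun z hz => left_ne_zero_of_mul hz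
  · by_cases hw : G.w x z = 0
    · simp [hw]
    · exact mul_le_of_le_one_right (G.nonneg x z) (hf.sub_le_one hw)

theorem neg_deg_le_lap {f : V → ℝ} (hf : G.Lip1 f) (x : V) : -G.deg x ≤ G.lap f x := by
  have h := lap_le_deg hf.neg x
  rw [lap_neg] at h
  linarith

theorem lip1_truncDist (hconn : G.toSimple.Connected) (x : V) (c : ℝ) :
    G.Lip1 fun z => min (G.dist x z : ℝ) c - c := fun a b => by
  have hdist : |(G.dist x a : ℝ) - G.dist x b| ≤ G.dist a b := by
    have hab : (G.dist x a : ℝ) ≤ G.dist x b + G.dist a b := by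
      rw [G.dist_comm a b]; exact_mod_cast hconn.dist_triangle
    have hba : (G.dist x b : ℝ) ≤ G.dist x a + G.dist a b := by
      exact_mod_cast hconn.dist_triangle
    exact abs_sub_le_iff.mpr ⟨by linarith, by linarith⟩
  calc |min (G.dist x a : ℝ) c - c - (min (G.dist x b : ℝ) c - c)|
      = |min (G.dist x a : ℝ) c - min (G.dist x b : ℝ) c| := by rw [sub_sub_sub_cancel_right]
    _ ≤ max |(G.dist x a : ℝ) - G.dist x b| |c - c| := abs_min_sub_min_le_max _ _ _ _
    _ ≤ G.dist a b := max_le hdist (by simp)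

theorem exists_lip1_finite_support (hconn : G.toSimple.Connected) (x y : V) :
    ∃ f : V → ℝ, G.Lip1 f ∧ (Function.support f).Finite ∧ f y - f x = G.dist x y := by
  refine ⟨fun z => min (G.dist x z : ℝ) (G.dist x y) - G.dist x y, lip1_truncDist hconn x _, ?_, ?_⟩
  · refine (hconn.finite_setOf_dist_le G.neighborSet_finite (G.dist x y) x).subset fun z hz => ?_
    by_contra hfar
    have hyz : (G.dist x y : ℝ) ≤ G.dist x z := Nat.cast_le.mpr (not_le.mp hfar).le
    exact hz (by simp [min_eq_right hyz])
  · have hx : G.dist x x = 0 := SimpleGraph.dist_self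
    simp [hx]

theorem curv_le_of_lip1 {x y : V} (hκ : 0 < G.curv x y) {f : V → ℝ} (hf : G.Lip1 f)
    (hsupp : (Function.support f).Finite) (hgrad : f y - f x = G.dist x y) :
    G.curv x y ≤ (G.lap f x - G.lap f y) / G.dist x y := by
  refine csInf_le ?_ ⟨f, hf, hsupp, hgrad, rfl⟩
  by_contra hunbdd
  -- `sInf` of a set of reals that is not bounded below is `0`
  exact hκ.ne' (Real.sInf_of_not_bddBelow hunbdd)

theorem dist_le_deg_add_deg_div_curv (hconn : G.toSimple.Connected) {x y : V} (hxy : x ≠ y)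
    (hκ : 0 < G.curv x y) : (G.dist x y : ℝ) ≤ (G.deg x + G.deg y) / G.curv x y := by
  have hD : (0 : ℝ) < G.dist x y := by exact_mod_cast hconn.pos_dist_of_ne hxy
  obtain ⟨f, hf, hsupp, hgrad⟩ := exists_lip1_finite_support hconn x y
  have hcurv := curv_le_of_lip1 hκ hf hsupp hgrad
  rw [le_div_iff₀ hD] at hcurv
  rw [le_div_iff₀ hκ, mul_comm]
  linarith [lap_le_deg hf x, neg_deg_le_lap hf y]

end WeightedGraph

theorem stmt17_general {V : Type} (G : WeightedGraph V)
    (hconn : G.toSimple.Connected) :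
    (∀ x y, x ≠ y → 0 < G.curv x y →
      (G.dist x y : ℝ) ≤ (G.deg x + G.deg y) / G.curv x y) ∧
    (∀ M K : ℝ, (∀ x, G.deg x ≤ M) → 0 < K → (∀ x y, x ≠ y → K ≤ G.curv x y) →
      ∀ x y, (G.dist x y : ℝ) ≤ 2 * M / K) := by
  refine ⟨fun x y => G.dist_le_deg_add_deg_div_curv hconn, fun M K hM hK hRic x y => ?_⟩
  have hM0 : 0 ≤ M := (G.deg_nonneg x).trans (hM x)
  rcases eq_or_ne x y with rfl | hxy
  · have hx : G.dist x x = 0 := SimpleGraph.dist_self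
    rw [hx, Nat.cast_zero]
    positivity
  · calc (G.dist x y : ℝ) ≤ (G.deg x + G.deg y) / G.curv x y :=
          G.dist_le_deg_add_deg_div_curv hconn hxy (hK.trans_le (hRic x y hxy))
      _ ≤ 2 * M / K := div_le_div₀ (by positivity) (by linarith [hM x, hM y]) hK (hRic x y hxy)

/-- If `κ(x,y) > 0` then `d(x,y) ≤ (Deg(x) + Deg(y))/κ(x,y)`; consequently, if `Deg ≤ M` and
`Ric(G) ≥ K > 0` then `diam(G) ≤ 2M/K`. -/
theorem stmt17 {V : Type} [Countable V] (G : WeightedGraph V)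
    (hconn : G.toSimple.Connected) :
    (∀ x y, x ≠ y → 0 < G.curv x y →
      (G.dist x y : ℝ) ≤ (G.deg x + G.deg y) / G.curv x y) ∧
    (∀ M K : ℝ, (∀ x, G.deg x ≤ M) → 0 < K → (∀ x y, x ≠ y → K ≤ G.curv x y) →
      ∀ x y, (G.dist x y : ℝ) ≤ 2 * M / K) :=
  stmt17_general G hconn
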